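/- Let K be a field, S = K[x_1, ..., x_n] with n ≥ 2, and I ⊆ S a squarefree monomial ideal. For k ∈ {0, 1} let I_k ⊆ S' = K[x_1, ..., x_{n-1}] be the monomial ideal with I ∩ x_n^k S' = x_n^k I_k, and let I_k^c be the K-span of the monomials of S' not in I_k. If I_0 = I_1 and I_0^c = ⊕_{i=1}^{r} u_i K[Z_i] is a squarefree Stanley decomposition with Z_i ⊆ {x_1, ..., x_{n-1}}, then I^c = ⊕_{i=1}^{r} u_i K[Z_i ∪ {x_n}] is a squarefree Stanley decomposition of I^c. -/

import Mathlib

/-!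
Every subspace involved is spanned by the monomials whose exponents lie in some set, so
direct sums and equalities of such subspaces are disjointness and equalities of exponent sets.
Since `I` is squarefree, whether `x^d ∈ I` depends only on the support of `d`; capping the
exponent of `x_n` at `1` and using `I_0 = I_1` gives `x^d ∈ I ↔ x^{d'} ∈ I_0`, where `d'`
forgets the last coordinate. Hence the exponents of monomials outside `I`, as well as those of
`u_i K[Z_i ∪ {x_n}]`, are the preimages under `d ↦ d'` of the corresponding sets for `I_0`
and `u_i K[Z_i]`, and preimages preserve disjointness and unions.
-/

open MvPolynomial

/-- The Stanley space `u K[Z]`: the `K`-span of all monomials `u * v` where `v` is a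
monomial in the variables of `Z`; the monomial `u` is given by its exponent vector `d`. -/
noncomputable def stanleySpace (K : Type*) [Field K] {σ : Type*} (d : σ →₀ ℕ)
    (Z : Finset σ) : Submodule K (MvPolynomial σ K) :=
  Submodule.span K
    {m | ∃ e : σ →₀ ℕ, (e.support : Set σ) ⊆ (Z : Set σ) ∧ m = monomial (d + e) (1 : K)}

/-- A monomial ideal: an ideal generated by monomials. -/
def IsMonomialIdeal {K : Type*} [Field K] {σ : Type*}
    (I : Ideal (MvPolynomial σ K)) : Prop :=
  ∃ G : Set (σ →₀ ℕ), I = Ideal.span ((fun d => monomial d (1 : K)) '' G)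

/-- A squarefree monomial ideal: an ideal generated by squarefree monomials. -/
def IsSquarefreeMonomialIdeal {K : Type*} [Field K] {σ : Type*}
    (I : Ideal (MvPolynomial σ K)) : Prop :=
  ∃ G : Set (σ →₀ ℕ), (∀ d ∈ G, ∀ i, d i ≤ 1) ∧
    I = Ideal.span ((fun d => monomial d (1 : K)) '' G)

/-- `I^c`: the `K`-span of all monomials not belonging to `I`. -/
noncomputable def compSpan (K : Type*) [Field K] {σ : Type*}
    (I : Ideal (MvPolynomial σ K)) : Submodule K (MvPolynomial σ K) :=
  Submodule.span K
    {m | ∃ d : σ →₀ ℕ, monomial d (1 : K) ∉ I ∧ m = monomial d (1 : K)}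

/-- `x_n^k V ⊆ S`: the image in `S = K[x_1,…,x_n]` of a `K`-subspace
`V ⊆ S' = K[x_1,…,x_{n-1}]` under inclusion followed by multiplication by `x_n^k`. -/
noncomputable def shiftUp (K : Type*) [Field K] (n : ℕ) (k : ℕ)
    (V : Submodule K (MvPolynomial (Fin n) K)) :
    Submodule K (MvPolynomial (Fin (n + 1)) K) :=
  (V.map (rename (Fin.castSucc : Fin n → Fin (n + 1)) :
      MvPolynomial (Fin n) K →ₐ[K] MvPolynomial (Fin (n + 1)) K).toLinearMap).map
    (LinearMap.mulLeft K ((X (Fin.last n) : MvPolynomial (Fin (n + 1)) K) ^ k))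

/-- The exponent vector of a monomial of `S' = K[x_1,…,x_n]` viewed in
`S = K[x_1,…,x_{n+1}]`. -/
noncomputable def liftExp (n : ℕ) (d : Fin n →₀ ℕ) : Fin (n + 1) →₀ ℕ :=
  Finsupp.mapDomain (Fin.castSucc : Fin n → Fin (n + 1)) d

open scoped Function

namespace MvPolynomial

section RestrictSupport

variable {σ R : Type*} [CommSemiring R]

theorem restrictSupport_iUnion {ι : Sort*} (T : ι → Set (σ →₀ ℕ)) :
    restrictSupport R (⋃ i, T i) = ⨆ i, restrictSupport R (T i) := by
  simp only [restrictSupport_eq_span, Set.image_iUnion, Submodule.span_iUnion]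

variable [Nontrivial R]

theorem restrictSupport_injective :
    Function.Injective (restrictSupport R : Set (σ →₀ ℕ) → Submodule R (MvPolynomial σ R)) := by
  intro s t h
  ext m
  simpa using SetLike.ext_iff.1 h (monomial m 1)

theorem disjoint_restrictSupport_iff {s t : Set (σ →₀ ℕ)} :
    Disjoint (restrictSupport R s) (restrictSupport R t) ↔ Disjoint s t := by
  refine ⟨fun h => Set.disjoint_left.2 fun m hs ht => ?_, fun h => ?_⟩
  · have := Submodule.disjoint_def.1 h (monomial m 1) (by simpa) (by simpa)
    simp at this
  · refine Submodule.disjoint_def.2 fun p hs ht => ?_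
    simpa using disjoint_self.1 (h.mono hs ht)

theorem iSupIndep_restrictSupport_iff {ι : Type*} {T : ι → Set (σ →₀ ℕ)} :
    iSupIndep (fun i => restrictSupport R (T i)) ↔ Pairwise (Disjoint on T) := by
  rw [← iSupIndep_iff_pairwiseDisjoint]
  refine forall_congr' fun i => ?_
  rw [← disjoint_restrictSupport_iff (R := R)]
  simp only [Set.iSup_eq_iUnion, restrictSupport_iUnion]

end RestrictSupport

end MvPolynomial

section

variable {K σ : Type*} [Field K]

def stanleyExps (d : σ →₀ ℕ) (Z : Finset σ) : Set (σ →₀ ℕ) :=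
  {m | d ≤ m ∧ ∀ j ∉ Z, m j = d j}

theorem stanleySpace_eq_restrictSupport (d : σ →₀ ℕ) (Z : Finset σ) :
    stanleySpace K d Z = restrictSupport K (stanleyExps d Z) := by
  rw [restrictSupport_eq_span, stanleySpace]
  congr 1
  ext p
  simp only [Set.mem_ofPred_eq, Set.mem_image, stanleyExps]
  constructor
  · rintro ⟨e, he, rfl⟩
    refine ⟨d + e, ⟨le_self_add, fun j hj => ?_⟩, rfl⟩
    simp [Finsupp.notMem_support_iff.1 fun h => hj (he h)]
  · rintro ⟨m, ⟨hle, hZ⟩, rfl⟩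
    refine ⟨m - d, fun j hj => ?_, by rw [add_tsub_cancel_of_le hle]⟩
    by_contra hjZ
    simp [hZ j hjZ] at hj

theorem compSpan_eq_restrictSupport (I : Ideal (MvPolynomial σ K)) :
    compSpan K I = restrictSupport K {d | monomial d (1 : K) ∉ I} := by
  rw [restrictSupport_eq_span, compSpan]
  congr 1
  ext p
  simp [eq_comm]

theorem IsSquarefreeMonomialIdeal.monomial_mem_iff_of_support_eq
    {I : Ideal (MvPolynomial σ K)} (hI : IsSquarefreeMonomialIdeal I) {d d' : σ →₀ ℕ}
    (h : d.support = d'.support) : monomial d (1 : K) ∈ I ↔ monomial d' (1 : K) ∈ I := by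
  classical
  obtain ⟨G, hG, rfl⟩ := hI
  simp only [mem_ideal_span_monomial_image, support_monomial, if_neg one_ne_zero,
    Finset.mem_singleton, forall_eq]
  refine exists_congr fun g => and_congr_right fun hg => forall_congr' fun j => ?_
  have hj : d j = 0 ↔ d' j = 0 := by simpa using (Finset.ext_iff.1 h j).not
  have := hG g hg j
  omega

end

section

variable (n : ℕ)

noncomputable def initExp (d : Fin (n + 1) →₀ ℕ) : Fin n →₀ ℕ :=
  d.comapDomain Fin.castSucc (Fin.castSucc_injective n).injOn

@[simp]
theorem initExp_apply (d : Fin (n + 1) →₀ ℕ) (j : Fin n) : initExp n d j = d j.castSucc :=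
  rfl

@[simp]
theorem liftExp_castSucc (d : Fin n →₀ ℕ) (j : Fin n) : liftExp n d j.castSucc = d j :=
  Finsupp.mapDomain_apply (Fin.castSucc_injective n) d j

@[simp]
theorem liftExp_last (d : Fin n →₀ ℕ) : liftExp n d (Fin.last n) = 0 :=
  Finsupp.mapDomain_of_notMem_range d _ (by simp)

theorem support_liftExp (d : Fin n →₀ ℕ) : (liftExp n d).support = d.support.image Fin.castSucc :=
  Finsupp.mapDomain_support_of_injective (Fin.castSucc_injective n) d

theorem liftExp_apply_le_one {d : Fin n →₀ ℕ} (h : ∀ j, d j ≤ 1) (j : Fin (n + 1)) :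
    liftExp n d j ≤ 1 := by
  cases j using Fin.lastCases <;> simp [h]

theorem stanleyExps_liftExp (d : Fin n →₀ ℕ) (Z : Finset (Fin n)) :
    stanleyExps (liftExp n d) (insert (Fin.last n) (Z.image Fin.castSucc)) =
      initExp n ⁻¹' stanleyExps d Z := by
  ext m
  simp [stanleyExps, Finsupp.le_def, Fin.forall_fin_succ']

theorem support_liftExp_initExp_add_single (d : Fin (n + 1) →₀ ℕ) :
    (liftExp n (initExp n d) + Finsupp.single (Fin.last n) (min (d (Fin.last n)) 1)).support =
      d.support := by
  ext j
  cases j using Fin.lastCases <;> simp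

variable {K : Type*} [Field K]

theorem monomial_liftExp_add_single (d : Fin n →₀ ℕ) (k : ℕ) :
    (monomial (liftExp n d + Finsupp.single (Fin.last n) k) (1 : K) :
        MvPolynomial (Fin (n + 1)) K) =
      X (Fin.last n) ^ k * rename Fin.castSucc (monomial d (1 : K)) := by
  rw [rename_monomial, X_pow_eq_monomial, monomial_mul, one_mul, add_comm (liftExp n d)]
  rfl

end

section

variable {K : Type*} [Field K] {n : ℕ}

theorem mul_rename_mem_shiftUp_iff {k : ℕ} {V : Submodule K (MvPolynomial (Fin n) K)}
    {p : MvPolynomial (Fin n) K} :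
    X (Fin.last n) ^ k * rename Fin.castSucc p ∈ shiftUp K n k V ↔ p ∈ V := by
  have hmul : Function.Injective
      (LinearMap.mulLeft K (X (Fin.last n) ^ k : MvPolynomial (Fin (n + 1)) K)) :=
    mul_right_injective₀ (pow_ne_zero _ (X_ne_zero _))
  rw [shiftUp, ← SetLike.mem_coe, Submodule.map_coe, Submodule.map_coe]
  exact hmul.mem_set_image.trans (rename_injective _ (Fin.castSucc_injective n)).mem_set_image

theorem mul_rename_mem_iff_of_slice {k : ℕ} {I : Ideal (MvPolynomial (Fin (n + 1)) K)}
    {J : Ideal (MvPolynomial (Fin n) K)}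
    (h : Submodule.restrictScalars K I ⊓ shiftUp K n k ⊤ =
      shiftUp K n k (Submodule.restrictScalars K J))
    (p : MvPolynomial (Fin n) K) :
    X (Fin.last n) ^ k * rename Fin.castSucc p ∈ I ↔ p ∈ J := by
  have hmem : X (Fin.last n) ^ k * rename Fin.castSucc p ∈ shiftUp K n k ⊤ :=
    mul_rename_mem_shiftUp_iff.2 trivial
  calc _ ↔ X (Fin.last n) ^ k * rename Fin.castSucc p ∈
        Submodule.restrictScalars K I ⊓ shiftUp K n k ⊤ := ⟨fun hI => ⟨hI, hmem⟩, And.left⟩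
    _ ↔ p ∈ J := by rw [h]; exact mul_rename_mem_shiftUp_iff

theorem IsSquarefreeMonomialIdeal.monomial_mem_iff_initExp_mem
    {I : Ideal (MvPolynomial (Fin (n + 1)) K)} (hI : IsSquarefreeMonomialIdeal I)
    {J : Ideal (MvPolynomial (Fin n) K)}
    (h₀ : Submodule.restrictScalars K I ⊓ shiftUp K n 0 ⊤ =
      shiftUp K n 0 (Submodule.restrictScalars K J))
    (h₁ : Submodule.restrictScalars K I ⊓ shiftUp K n 1 ⊤ =
      shiftUp K n 1 (Submodule.restrictScalars K J))
    (d : Fin (n + 1) →₀ ℕ) :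
    monomial d (1 : K) ∈ I ↔ monomial (initExp n d) (1 : K) ∈ J := by
  rw [← hI.monomial_mem_iff_of_support_eq (support_liftExp_initExp_add_single n d),
    monomial_liftExp_add_single]
  obtain hk | hk : min (d (Fin.last n)) 1 = 0 ∨ min (d (Fin.last n)) 1 = 1 := by omega
  · rw [hk]
    exact mul_rename_mem_iff_of_slice h₀ _
  · rw [hk]
    exact mul_rename_mem_iff_of_slice h₁ _

end

theorem janet_comp_squarefree_decomposition_equal_slices_general
    (K : Type*) [Field K] (n : ℕ)
    (I : Ideal (MvPolynomial (Fin (n + 1)) K)) (hI : IsSquarefreeMonomialIdeal I)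
    (I0 I1 : Ideal (MvPolynomial (Fin n) K))
    (hI0 : Submodule.restrictScalars K I ⊓ shiftUp K n 0 ⊤ =
      shiftUp K n 0 (Submodule.restrictScalars K I0))
    (hI1 : Submodule.restrictScalars K I ⊓ shiftUp K n 1 ⊤ =
      shiftUp K n 1 (Submodule.restrictScalars K I1))
    (heq : I0 = I1)
    (r : ℕ) (u : Fin r → (Fin n →₀ ℕ)) (Z : Fin r → Finset (Fin n))
    (hu : ∀ i, (∀ j, u i j ≤ 1) ∧ (u i).support ⊆ Z i)
    (hdec0 : iSupIndep (fun i => stanleySpace K (u i) (Z i)) ∧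
      (⨆ i, stanleySpace K (u i) (Z i)) = compSpan K I0) :
    (∀ i : Fin r, (∀ j, liftExp n (u i) j ≤ 1) ∧
      (liftExp n (u i)).support ⊆ insert (Fin.last n) ((Z i).image Fin.castSucc)) ∧
    iSupIndep (fun i : Fin r =>
      stanleySpace K (liftExp n (u i)) (insert (Fin.last n) ((Z i).image Fin.castSucc))) ∧
    (⨆ i : Fin r,
      stanleySpace K (liftExp n (u i)) (insert (Fin.last n) ((Z i).image Fin.castSucc))) =
      compSpan K I := by
  subst heq
  have hdisj : Pairwise (Disjoint on fun i => stanleyExps (u i) (Z i)) := by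
    simpa only [stanleySpace_eq_restrictSupport, iSupIndep_restrictSupport_iff] using hdec0.1
  have hunion : ⋃ i, stanleyExps (u i) (Z i) = {d | monomial d (1 : K) ∉ I0} := by
    apply restrictSupport_injective (R := K)
    simpa only [restrictSupport_iUnion, stanleySpace_eq_restrictSupport,
      compSpan_eq_restrictSupport] using hdec0.2
  have hcomp : {d | monomial d (1 : K) ∉ I} = initExp n ⁻¹' {d | monomial d (1 : K) ∉ I0} :=
    Set.ext fun d => (hI.monomial_mem_iff_initExp_mem hI0 hI1 d).not
  simp only [stanleySpace_eq_restrictSupport, stanleyExps_liftExp, iSupIndep_restrictSupport_iff,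
    compSpan_eq_restrictSupport, ← restrictSupport_iUnion, ← Set.preimage_iUnion, hunion, hcomp]
  refine ⟨fun i => ⟨liftExp_apply_le_one n (hu i).1, ?_⟩, fun i j hij => (hdisj hij).preimage _,
    trivial⟩
  rw [support_liftExp]
  exact (Finset.image_subset_image (hu i).2).trans (Finset.subset_insert _ _)

/-- (Here `S = K[x_1,…,x_{n+1}]`, `S' = K[x_1,…,x_n]`, `n ≥ 1`.) Let
`I ⊆ S` be a squarefree monomial ideal with equal slices `I_0 = I_1` (determined by
`I ∩ x_{n+1}^k S' = x_{n+1}^k I_k`). Given a squarefree Stanley decomposition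
`I_0^c = ⊕_i u_i K[Z_i]`, the decomposition `I^c = ⊕_i u_i K[Z_i ∪ {x_{n+1}}]` is a
squarefree Stanley decomposition of `I^c`. -/
theorem janet_comp_squarefree_decomposition_equal_slices
    (K : Type*) [Field K] (n : ℕ) (hn : 1 ≤ n)
    (I : Ideal (MvPolynomial (Fin (n + 1)) K)) (hI : IsSquarefreeMonomialIdeal I)
    (I0 I1 : Ideal (MvPolynomial (Fin n) K))
    (hI0 : Submodule.restrictScalars K I ⊓ shiftUp K n 0 ⊤ =
      shiftUp K n 0 (Submodule.restrictScalars K I0))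
    (hI1 : Submodule.restrictScalars K I ⊓ shiftUp K n 1 ⊤ =
      shiftUp K n 1 (Submodule.restrictScalars K I1))
    (heq : I0 = I1)
    (r : ℕ) (u : Fin r → (Fin n →₀ ℕ)) (Z : Fin r → Finset (Fin n))
    (hu : ∀ i, (∀ j, u i j ≤ 1) ∧ (u i).support ⊆ Z i)
    (hdec0 : iSupIndep (fun i => stanleySpace K (u i) (Z i)) ∧
      (⨆ i, stanleySpace K (u i) (Z i)) = compSpan K I0) :
    (∀ i : Fin r, (∀ j, liftExp n (u i) j ≤ 1) ∧
      (liftExp n (u i)).support ⊆ insert (Fin.last n) ((Z i).image Fin.castSucc)) ∧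
    iSupIndep (fun i : Fin r =>
      stanleySpace K (liftExp n (u i)) (insert (Fin.last n) ((Z i).image Fin.castSucc))) ∧
    (⨆ i : Fin r,
      stanleySpace K (liftExp n (u i)) (insert (Fin.last n) ((Z i).image Fin.castSucc))) =
      compSpan K I :=
  janet_comp_squarefree_decomposition_equal_slices_general K n I hI I0 I1 hI0 hI1 heq r u Z hu hdec0
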